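/- Let S be a nonempty subset of {1,…,n} and let w ∈ Sym(n) be such that w⁻¹(i) < w⁻¹(j) whenever i, j ∈ S and i < j. Then for all x, y ∈ Sym(S): x∘w ≤ y∘w in the Bruhat order of Sym(n) if and only if x ≤_S y in the Bruhat order of Sym(S). -/

import Mathlib

/-- The length of `w` with respect to a generating set `S`. -/
noncomputable def lengthWrt {G : Type*} [Group G] (S : Set G) (w : G) : ℕ :=
  sInf {k | ∃ l : List G, (∀ s ∈ l, s ∈ S) ∧ l.prod = w ∧ l.length = k}

/-- A reduced word with letters in `S`. -/
def IsReducedWordWrt {G : Type*} [Group G] (S : Set G) (l : List G) : Prop :=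
  (∀ s ∈ l, s ∈ S) ∧ lengthWrt S l.prod = l.length

/-- The Bruhat order with respect to `S`: `x ≤ y` iff some reduced word for `y` contains
a subword which is a reduced word for `x`. -/
def bruhatLEWrt {G : Type*} [Group G] (S : Set G) (x y : G) : Prop :=
  ∃ l : List G, IsReducedWordWrt S l ∧ l.prod = y ∧
    ∃ l' : List G, l'.Sublist l ∧ IsReducedWordWrt S l' ∧ l'.prod = x

/-- The simple generators of `Sym(n)`: the adjacent transpositions `(i, i+1)`. -/
def adjTranspositions (n : ℕ) : Set (Equiv.Perm (Fin n)) :=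
  {g | ∃ i j : Fin n, (i : ℕ) + 1 = (j : ℕ) ∧ g = Equiv.swap i j}

/-- The simple generators of `Sym(S)` for `S = {ℓ₁ < ⋯ < ℓ_h}`: the transpositions
`(ℓ_i, ℓ_{i+1})` of consecutive elements of `S`. -/
def adjTranspositionsOn (n : ℕ) (S : Set (Fin n)) : Set (Equiv.Perm (Fin n)) :=
  {g | ∃ a b : Fin n, a ∈ S ∧ b ∈ S ∧ a < b ∧ (∀ c ∈ S, ¬ (a < c ∧ c < b)) ∧
    g = Equiv.swap a b}

/-!
Both Bruhat orders are read off from rank counts (the tableau criterion): for `u, v ∈ Sym T`,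
`u ≤ v` iff for every initial segment `I` of positions and every value `k`, at most as many
`c ∈ T ∩ I` have `k ≤ u c` as have `k ≤ v c`. The length in `Sym T` is the number of
inversions inside `T`, so appending the generator `swap a b` to a reduced word keeps it reduced
exactly at an ascent; together with the lifting behaviour of rank counts under right
multiplication by `swap a b`, induction on length gives both directions of the criterion.
Right multiplication by `w` only relabels positions: since `w⁻¹` is increasing on `S`, initial
segments of positions cut out of `S` exactly its initial segments, and positions outside `S`
contribute equally for `x` and `y`.
-/

open Equiv

local notation "Sym" T:max => fixingSubgroup (Perm (Fin _)) (Tᶜ)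

namespace BruhatSym

variable {n : ℕ} {T I J : Set (Fin n)} {u v w : Perm (Fin n)} {a b c k : Fin n}
  {l : List (Perm (Fin n))}

theorem apply_eq_of_mem_sym (hu : u ∈ Sym T) (hc : c ∉ T) : u c = c :=
  (mem_fixingSubgroup_iff _).1 hu c hc

theorem mem_of_apply_ne (hu : u ∈ Sym T) (hc : u c ≠ c) : c ∈ T :=
  by_contra fun h => hc (apply_eq_of_mem_sym hu h)

theorem apply_mem_iff (hu : u ∈ Sym T) : u c ∈ T ↔ c ∈ T := by
  constructor
  · intro h
    by_contra hc
    rw [apply_eq_of_mem_sym hu hc] at h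
    exact hc h
  · intro h
    by_contra hc
    rw [u.injective (apply_eq_of_mem_sym hu hc)] at hc
    exact hc h

theorem swap_mem_sym (ha : a ∈ T) (hb : b ∈ T) : swap a b ∈ Sym T :=
  (mem_fixingSubgroup_iff _).2 fun _ hc =>
    swap_apply_of_ne_of_ne (by rintro rfl; exact hc ha) (by rintro rfl; exact hc hb)

structure IsConsecutive (T : Set (Fin n)) (a b : Fin n) : Prop where
  left_mem : a ∈ T
  right_mem : b ∈ T
  lt : a < b
  not_between : ∀ c ∈ T, ¬ (a < c ∧ c < b)

theorem mem_adjTranspositionsOn_iff {g : Perm (Fin n)} :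
    g ∈ adjTranspositionsOn n T ↔ ∃ a b, IsConsecutive T a b ∧ g = swap a b := by
  constructor
  · rintro ⟨a, b, ha, hb, hab, hbtw, rfl⟩
    exact ⟨a, b, ⟨ha, hb, hab, hbtw⟩, rfl⟩
  · rintro ⟨a, b, ⟨ha, hb, hab, hbtw⟩, rfl⟩
    exact ⟨a, b, ha, hb, hab, hbtw, rfl⟩

theorem adjTranspositions_eq_adjTranspositionsOn_univ :
    adjTranspositions n = adjTranspositionsOn n Set.univ := by
  ext g
  constructor
  · rintro ⟨i, j, hij, rfl⟩
    exact ⟨i, j, trivial, trivial, by omega, fun c _ => by omega, rfl⟩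
  · rintro ⟨i, j, -, -, hij, hbtw, rfl⟩
    refine ⟨i, j, ?_, rfl⟩
    by_contra hne
    exact hbtw ⟨i + 1, by omega⟩ trivial
      ⟨by simp [Fin.lt_def], by simp [Fin.lt_def]; omega⟩

namespace IsConsecutive

variable (h : IsConsecutive T a b)
include h

theorem le_or_le (hc : c ∈ T) : c ≤ a ∨ b ≤ c := by
  by_contra! H
  exact h.not_between c hc H

theorem swap_mem_sym : swap a b ∈ Sym T := BruhatSym.swap_mem_sym h.left_mem h.right_mem

theorem swap_pair {p q : Fin n} (hp : p ∈ T) (hq : q ∈ T) (hpq : p < q)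
    (hne : (p, q) ≠ (a, b)) :
    (swap a b p, swap a b q) ≠ (a, b) ∧ swap a b p ∈ T ∧ swap a b q ∈ T ∧
      swap a b p < swap a b q := by
  have hp' := h.le_or_le hp
  have hq' := h.le_or_le hq
  have hab := h.lt
  refine ⟨?_, (apply_mem_iff h.swap_mem_sym).2 hp, (apply_mem_iff h.swap_mem_sym).2 hq, ?_⟩ <;>
    simp only [swap_apply_def, ne_eq, Prod.mk.injEq] at hne ⊢ <;> split_ifs <;> omega

end IsConsecutive

def inversions (T : Set (Fin n)) (u : Perm (Fin n)) : Set (Fin n × Fin n) :=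
  {p | p.1 ∈ T ∧ p.2 ∈ T ∧ p.1 < p.2 ∧ u p.2 < u p.1}

theorem ncard_inversions_one : (inversions T 1).ncard = 0 :=
  (Set.ncard_eq_zero (Set.toFinite _)).2 <| Set.eq_empty_of_forall_notMem
    fun _ ⟨_, _, hlt, hgt⟩ => lt_asymm hlt hgt

theorem ncard_inversions_mul_swap (h : IsConsecutive T a b) (hu : u a < u b) :
    (inversions T (u * swap a b)).ncard = (inversions T u).ncard + 1 := by
  have hab : (a, b) ∈ inversions T (u * swap a b) :=
    ⟨h.left_mem, h.right_mem, h.lt, by simpa [Perm.mul_apply] using hu⟩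
  have hab' : (a, b) ∉ inversions T u := fun ⟨_, _, _, hba⟩ => lt_asymm hu hba
  have hrest : inversions T (u * swap a b) \ {(a, b)} =
      (swap a b).prodCongr (swap a b) ⁻¹' (inversions T u \ {(a, b)}) := by
    ext ⟨p, q⟩
    simp only [inversions, Set.mem_sdiff, Set.mem_singleton_iff, Set.mem_preimage,
      Set.mem_ofPred_eq, Perm.mul_apply, prodCongr_apply, Prod.map]
    constructor
    · rintro ⟨⟨hp, hq, hpq, hinv⟩, hne⟩
      obtain ⟨hne', hp', hq', hpq'⟩ := h.swap_pair hp hq hpq hne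
      exact ⟨⟨hp', hq', hpq', hinv⟩, hne'⟩
    · rintro ⟨⟨hp, hq, hpq, hinv⟩, hne⟩
      obtain ⟨hne', hp', hq', hpq'⟩ := h.swap_pair hp hq hpq hne
      simp only [swap_apply_self] at hne' hp' hq' hpq'
      exact ⟨⟨hp', hq', hpq', hinv⟩, hne'⟩
  rw [← Set.ncard_sdiff_singleton_add_one hab, hrest,
    Set.ncard_preimage_of_injective_subset_range (Equiv.injective _) (by simp),
    Set.sdiff_singleton_eq_self hab']

theorem ncard_inversions_mul_swap_of_gt (h : IsConsecutive T a b) (hu : u b < u a) :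
    (inversions T (u * swap a b)).ncard + 1 = (inversions T u).ncard := by
  have := ncard_inversions_mul_swap (u := u * swap a b) h (by simpa [Perm.mul_apply])
  rwa [mul_swap_mul_self, eq_comm] at this

theorem ncard_inversions_mul_swap_le (h : IsConsecutive T a b) (u : Perm (Fin n)) :
    (inversions T (u * swap a b)).ncard ≤ (inversions T u).ncard + 1 := by
  rcases lt_or_gt_of_ne (u.injective.ne h.lt.ne) with hu | hu
  · rw [ncard_inversions_mul_swap h hu]
  · have := ncard_inversions_mul_swap_of_gt h hu
    omega

theorem exists_lt_apply_of_ne_one (hu : u ≠ 1) : ∃ t, t < u t ∧ ∀ c < t, u c = c := by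
  obtain ⟨t, hmoved, htm⟩ := exists_minimal_of_wellFoundedLT (fun c => u c ≠ c) <| by
    by_contra! H
    exact hu (Perm.ext H)
  have hmin : ∀ c < t, u c = c := fun c hc => by_contra fun hne => (htm hne hc.le).not_gt hc
  refine ⟨t, lt_of_le_of_ne (not_lt.1 fun hlt => hmoved ?_) hmoved.symm, hmin⟩
  exact u.injective (hmin _ hlt)

theorem exists_inversion_of_ne_one (hu : u ∈ Sym T) (h1 : u ≠ 1) :
    ∃ p ∈ T, ∃ q ∈ T, p < q ∧ u q < u p := by
  obtain ⟨t, ht, hmin⟩ := exists_lt_apply_of_ne_one h1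
  have hr : u (u⁻¹ t) = t := u.apply_symm_apply t
  have hrt : u⁻¹ t ≠ t := fun he => ht.ne (by rw [← he, hr, he])
  have hlt : t < u⁻¹ t :=
    lt_of_le_of_ne (not_lt.1 fun hlt => hrt (by rw [← hmin _ hlt, hr])) hrt.symm
  exact ⟨t, mem_of_apply_ne hu ht.ne', u⁻¹ t, mem_of_apply_ne hu (by rw [hr]; exact hrt.symm),
    hlt, by rwa [hr]⟩

theorem exists_descent_of_inversion {p q : Fin n} (hp : p ∈ T) (hq : q ∈ T) (hpq : p < q)
    (hu : u q < u p) : ∃ a b, IsConsecutive T a b ∧ u b < u a := by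
  induction hgap : (q : ℕ) - p using Nat.strong_induction_on generalizing p q with
  | _ m ih =>
    by_cases hcons : IsConsecutive T p q
    · exact ⟨p, q, hcons, hu⟩
    obtain ⟨c, hc, hpc, hcq⟩ : ∃ c ∈ T, p < c ∧ c < q := by
      by_contra! H
      exact hcons ⟨hp, hq, hpq, fun c hc hbtw => (H c hc hbtw.1).not_gt hbtw.2⟩
    -- an inversion `(p, q)` splits at `c` into an inversion with a smaller gap
    rcases lt_or_gt_of_ne (u.injective.ne hpc.ne') with hcp | hpc'
    · exact ih _ (by omega) hp hc hpc hcp rfl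
    · exact ih _ (by omega) hc hq hcq (hu.trans hpc') rfl

theorem exists_descent_of_ne_one (hu : u ∈ Sym T) (h1 : u ≠ 1) :
    ∃ a b, IsConsecutive T a b ∧ u b < u a :=
  let ⟨_, hp, _, hq, hpq, hinv⟩ := exists_inversion_of_ne_one hu h1
  exists_descent_of_inversion hp hq hpq hinv

theorem list_prod_mem_sym (hl : ∀ g ∈ l, g ∈ adjTranspositionsOn n T) : l.prod ∈ Sym T :=
  list_prod_mem fun g hg =>
    let ⟨_, _, h, hg⟩ := mem_adjTranspositionsOn_iff.1 (hl g hg)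
    hg ▸ h.swap_mem_sym

theorem ncard_inversions_prod_le (hl : ∀ g ∈ l, g ∈ adjTranspositionsOn n T) :
    (inversions T l.prod).ncard ≤ l.length := by
  induction l using List.reverseRecOn with
  | nil => simp [ncard_inversions_one]
  | append_singleton l g ih =>
    obtain ⟨a, b, h, rfl⟩ := mem_adjTranspositionsOn_iff.1 (hl g (by simp))
    have := ncard_inversions_mul_swap_le h l.prod
    have := ih fun g hg => hl g (by simp [hg])
    simp only [List.prod_append, List.prod_singleton, List.length_append, List.length_singleton]
    omega

theorem exists_word_length_eq (hu : u ∈ Sym T) :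
    ∃ l : List (Perm (Fin n)), (∀ g ∈ l, g ∈ adjTranspositionsOn n T) ∧ l.prod = u ∧
      l.length = (inversions T u).ncard := by
  induction hm : (inversions T u).ncard using Nat.strong_induction_on generalizing u with
  | _ m ih =>
    by_cases h1 : u = 1
    · subst h1
      exact ⟨[], by simp, rfl, by simp [← hm, ncard_inversions_one]⟩
    obtain ⟨a, b, h, hdesc⟩ := exists_descent_of_ne_one hu h1
    have hdec := ncard_inversions_mul_swap_of_gt h hdesc
    obtain ⟨l, hl, hprod, hlen⟩ := ih _ (by omega) (mul_mem hu h.swap_mem_sym) rfl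
    refine ⟨l ++ [swap a b], ?_, by simp [hprod], by simp [hlen]; omega⟩
    simpa [or_imp, forall_and] using ⟨hl, mem_adjTranspositionsOn_iff.2 ⟨a, b, h, rfl⟩⟩

theorem lengthWrt_eq_ncard_inversions (hu : u ∈ Sym T) :
    lengthWrt (adjTranspositionsOn n T) u = (inversions T u).ncard := by
  obtain ⟨l, hl, hprod, hlen⟩ := exists_word_length_eq hu
  refine le_antisymm (Nat.sInf_le ⟨l, hl, hprod, hlen⟩)
    (le_csInf ⟨_, l, hl, hprod, hlen⟩ ?_)
  rintro k ⟨l', hl', rfl, rfl⟩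
  exact ncard_inversions_prod_le hl'

theorem isReducedWordWrt_iff (hl : ∀ g ∈ l, g ∈ adjTranspositionsOn n T) :
    IsReducedWordWrt (adjTranspositionsOn n T) l ↔ (inversions T l.prod).ncard = l.length := by
  rw [IsReducedWordWrt, lengthWrt_eq_ncard_inversions (list_prod_mem_sym hl)]
  exact and_iff_right hl

theorem isReducedWordWrt_append_swap_iff (hl : ∀ g ∈ l, g ∈ adjTranspositionsOn n T)
    (h : IsConsecutive T a b) :
    IsReducedWordWrt (adjTranspositionsOn n T) (l ++ [swap a b]) ↔
      IsReducedWordWrt (adjTranspositionsOn n T) l ∧ l.prod a < l.prod b := by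
  have hl' : ∀ g ∈ l ++ [swap a b], g ∈ adjTranspositionsOn n T := by
    simpa [or_imp, forall_and] using ⟨hl, mem_adjTranspositionsOn_iff.2 ⟨a, b, h, rfl⟩⟩
  rw [isReducedWordWrt_iff hl', isReducedWordWrt_iff hl, List.prod_append, List.prod_singleton,
    List.length_append, List.length_singleton]
  rcases lt_or_gt_of_ne (l.prod.injective.ne h.lt.ne) with hasc | hdesc
  · simp [ncard_inversions_mul_swap h hasc, hasc]
  · have := ncard_inversions_mul_swap_of_gt h hdesc
    have := ncard_inversions_prod_le hl
    simp only [hdesc.not_gt, and_false, iff_false]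
    omega

theorem isReducedWordWrt_nil : IsReducedWordWrt (adjTranspositionsOn n T) [] :=
  (isReducedWordWrt_iff (by simp)).2 (by simp [ncard_inversions_one])

theorem bruhatLEWrt_one_one : bruhatLEWrt (adjTranspositionsOn n T) 1 1 :=
  ⟨[], isReducedWordWrt_nil, rfl, [], List.Sublist.refl _, isReducedWordWrt_nil, rfl⟩

theorem bruhatLEWrt_mul_swap (h : IsConsecutive T a b)
    (huv : bruhatLEWrt (adjTranspositionsOn n T) u v) (hv : v a < v b) :
    bruhatLEWrt (adjTranspositionsOn n T) u (v * swap a b) := by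
  obtain ⟨l, hl, rfl, l', hsub, hl', rfl⟩ := huv
  exact ⟨l ++ [swap a b], (isReducedWordWrt_append_swap_iff hl.1 h).2 ⟨hl, hv⟩, by simp,
    l', hsub.trans (List.sublist_append_left _ _), hl', rfl⟩

theorem bruhatLEWrt_mul_swap_mul_swap (h : IsConsecutive T a b)
    (huv : bruhatLEWrt (adjTranspositionsOn n T) u v) (hu : u a < u b) (hv : v a < v b) :
    bruhatLEWrt (adjTranspositionsOn n T) (u * swap a b) (v * swap a b) := by
  obtain ⟨l, hl, rfl, l', hsub, hl', rfl⟩ := huv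
  exact ⟨l ++ [swap a b], (isReducedWordWrt_append_swap_iff hl.1 h).2 ⟨hl, hv⟩, by simp,
    l' ++ [swap a b], hsub.append (List.Sublist.refl _),
    (isReducedWordWrt_append_swap_iff hl'.1 h).2 ⟨hl', hu⟩, by simp⟩

noncomputable def rankCount (T : Set (Fin n)) (u : Perm (Fin n)) (I : Set (Fin n)) (k : Fin n) :
    ℕ :=
  (T ∩ I ∩ {c | k ≤ u c}).ncard

def RankLE (T : Set (Fin n)) (u v : Perm (Fin n)) : Prop :=
  ∀ I, IsLowerSet I → ∀ k, rankCount T u I k ≤ rankCount T v I k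

theorem RankLE.refl (u : Perm (Fin n)) : RankLE T u u := fun _ _ _ => le_rfl

theorem RankLE.trans (huv : RankLE T u v) (hvw : RankLE T v w) : RankLE T u w :=
  fun I hI k => (huv I hI k).trans (hvw I hI k)

theorem rankCount_congr (h : T ∩ I = T ∩ J) : rankCount T u I k = rankCount T u J k := by
  rw [rankCount, rankCount, h]

theorem rankCount_insert (hc : c ∈ T) (hcJ : c ∉ J) :
    rankCount T u (insert c J) k = rankCount T u J k + if k ≤ u c then 1 else 0 := by
  rw [rankCount, rankCount, Set.inter_insert_of_mem hc]
  split_ifs with hk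
  · rw [Set.insert_inter_of_mem (t := {x | k ≤ u x}) hk,
      Set.ncard_insert_of_notMem fun h => hcJ h.1.2]
  · rw [Set.insert_inter_of_notMem (t := {x | k ≤ u x}) hk, add_zero]

namespace IsConsecutive

variable (h : IsConsecutive T a b)
include h

theorem rankCount_mul_swap (hI : a ∈ I ↔ b ∈ I) :
    rankCount T (u * swap a b) I k = rankCount T u I k := by
  have hcI (c : Fin n) : swap a b c ∈ I ↔ c ∈ I := by
    rcases eq_or_ne c a with rfl | hca
    · rw [swap_apply_left]; exact hI.symm
    rcases eq_or_ne c b with rfl | hcb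
    · rw [swap_apply_right]; exact hI
    rw [swap_apply_of_ne_of_ne hca hcb]
  have hpre :
      T ∩ I ∩ {c | k ≤ (u * swap a b) c} = swap a b ⁻¹' (T ∩ I ∩ {c | k ≤ u c}) := by
    ext c
    simp only [Set.mem_inter_iff, Set.mem_preimage, Set.mem_ofPred_eq, Perm.mul_apply, hcI,
      apply_mem_iff h.swap_mem_sym]
  rw [rankCount, rankCount, hpre,
    Set.ncard_preimage_of_injective_subset_range (swap a b).injective (by simp)]

theorem inter_eq_inter_Iic_left (hI : IsLowerSet I) (ha : a ∈ I) (hb : b ∉ I) :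
    T ∩ I = T ∩ Set.Iic a := by
  ext c
  simp only [Set.mem_inter_iff, Set.mem_Iic, and_congr_right_iff]
  intro hc
  exact ⟨fun hcI => (h.le_or_le hc).resolve_right fun hbc => hb (hI hbc hcI),
    fun hca => hI hca ha⟩

theorem rankCount_Iic_left :
    rankCount T u (Set.Iic a) k = rankCount T u (Set.Iio a) k + if k ≤ u a then 1 else 0 := by
  rw [← Set.Iio_insert, rankCount_insert h.left_mem (lt_irrefl a)]

theorem rankCount_Iic_right :
    rankCount T u (Set.Iic b) k = rankCount T u (Set.Iio a) k + (if k ≤ u a then 1 else 0) +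
      if k ≤ u b then 1 else 0 := by
  have : T ∩ Set.Iic b = T ∩ insert b (Set.Iic a) := by
    rw [← Set.Iio_insert, Set.inter_insert_of_mem h.right_mem,
      Set.inter_insert_of_mem h.right_mem,
      inter_eq_inter_Iic_left h (isLowerSet_Iio b) h.lt (lt_irrefl b)]
  rw [rankCount_congr this, rankCount_insert h.right_mem h.lt.not_ge, rankCount_Iic_left h]

theorem rankCount_mul_swap_Iic_left :
    rankCount T (u * swap a b) (Set.Iic a) k =
      rankCount T u (Set.Iio a) k + if k ≤ u b then 1 else 0 := by
  rw [rankCount_Iic_left h, rankCount_mul_swap h (iff_of_false (lt_irrefl a) h.lt.not_gt),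
    Perm.mul_apply, swap_apply_left]

theorem rankLE_of_rankCount_le
    (hsame : ∀ I, IsLowerSet I → (a ∈ I ↔ b ∈ I) →
      ∀ k, rankCount T u I k ≤ rankCount T v I k)
    (hcut : ∀ k, rankCount T u (Set.Iic a) k ≤ rankCount T v (Set.Iic a) k) :
    RankLE T u v := by
  intro I hI k
  by_cases hab : a ∈ I ↔ b ∈ I
  · exact hsame I hI hab k
  have ha : a ∈ I := by_contra fun ha => hab (iff_of_false ha fun hb => ha (hI h.lt.le hb))
  have hb : b ∉ I := fun hb => hab (iff_of_true ha hb)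
  rw [rankCount_congr (h.inter_eq_inter_Iic_left hI ha hb),
    rankCount_congr (h.inter_eq_inter_Iic_left hI ha hb)]
  exact hcut k

theorem rankLE_mul_swap_self (hu : u a < u b) : RankLE T u (u * swap a b) := by
  refine h.rankLE_of_rankCount_le (fun I _ hI k => (h.rankCount_mul_swap hI).ge) fun k => ?_
  rw [h.rankCount_Iic_left, h.rankCount_mul_swap_Iic_left]
  split_ifs <;> omega

theorem rankLE_mul_swap (huv : RankLE T u v) (hor : u a < u b ↔ v a < v b) :
    RankLE T (u * swap a b) (v * swap a b) := by
  refine h.rankLE_of_rankCount_le (fun I hI hab k => ?_) fun k => ?_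
  · rw [h.rankCount_mul_swap hab, h.rankCount_mul_swap hab]
    exact huv I hI k
  -- at the cut, everything is decided by the counts below `a` and the values at `a` and `b`
  have hbelow := huv _ (isLowerSet_Iio a) k
  have hupto := huv _ (isLowerSet_Iic b) k
  rw [h.rankCount_Iic_right, h.rankCount_Iic_right] at hupto
  rw [h.rankCount_mul_swap_Iic_left, h.rankCount_mul_swap_Iic_left]
  have hu := u.injective.ne h.lt.ne
  have hv := v.injective.ne h.lt.ne
  split_ifs at hupto ⊢ <;> omega

theorem rankLE_mul_swap_of_lt (huv : RankLE T u v) (hu : u a < u b) :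
    RankLE T u (v * swap a b) := by
  refine h.rankLE_of_rankCount_le (fun I hI hab k => ?_) fun k => ?_
  · rw [h.rankCount_mul_swap hab]
    exact huv I hI k
  have hbelow := huv _ (isLowerSet_Iio a) k
  have hupto := huv _ (isLowerSet_Iic b) k
  rw [h.rankCount_Iic_right, h.rankCount_Iic_right] at hupto
  rw [h.rankCount_Iic_left, h.rankCount_mul_swap_Iic_left]
  split_ifs at hupto ⊢ <;> omega

end IsConsecutive

theorem rankLE_of_sublist {l l' : List (Perm (Fin n))}
    (hl : IsReducedWordWrt (adjTranspositionsOn n T) l) (hsub : l'.Sublist l)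
    (hl' : IsReducedWordWrt (adjTranspositionsOn n T) l') : RankLE T l'.prod l.prod := by
  induction l using List.reverseRecOn generalizing l' with
  | nil =>
    rw [List.sublist_nil.1 hsub]
    exact RankLE.refl _
  | append_singleton l g ih =>
    obtain ⟨a, b, h, rfl⟩ := mem_adjTranspositionsOn_iff.1 (hl.1 g (by simp))
    obtain ⟨hl, hasc⟩ :=
      (isReducedWordWrt_append_swap_iff (fun x hx => hl.1 x (by simp [hx])) h).1 hl
    obtain ⟨l₁, l₂, rfl, h₁, h₂⟩ := List.sublist_append_iff.1 hsub
    rcases List.sublist_singleton.1 h₂ with rfl | rfl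
    · rw [List.append_nil] at hl' ⊢
      rw [List.prod_append, List.prod_singleton]
      exact (ih hl h₁ hl').trans (h.rankLE_mul_swap_self hasc)
    · obtain ⟨hl₁, hasc₁⟩ :=
        (isReducedWordWrt_append_swap_iff (fun x hx => hl'.1 x (by simp [hx])) h).1 hl'
      simp only [List.prod_append, List.prod_singleton]
      exact h.rankLE_mul_swap (ih hl h₁ hl₁) (iff_of_true hasc₁ hasc)

theorem eq_one_of_rankLE_one (hu : u ∈ Sym T) (h : RankLE T u 1) : u = 1 := by
  by_contra h1
  obtain ⟨t, ht, -⟩ := exists_lt_apply_of_ne_one h1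
  have hpos : 0 < rankCount T u (Set.Iic t) (u t) :=
    (Set.ncard_pos (Set.toFinite _)).2
      ⟨t, ⟨mem_of_apply_ne hu ht.ne', le_refl t⟩, le_refl (u t)⟩
  have hzero : rankCount T 1 (Set.Iic t) (u t) = 0 :=
    (Set.ncard_eq_zero (Set.toFinite _)).2 <| Set.eq_empty_of_forall_notMem
      fun _ ⟨⟨_, hct⟩, hk⟩ => (hk.trans hct).not_gt ht
  have := h _ (isLowerSet_Iic t) (u t)
  omega

theorem bruhatLEWrt_of_rankLE (hu : u ∈ Sym T) (hv : v ∈ Sym T) (huv : RankLE T u v) :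
    bruhatLEWrt (adjTranspositionsOn n T) u v := by
  induction hm : (inversions T v).ncard using Nat.strong_induction_on generalizing u v with
  | _ m ih =>
    by_cases hv1 : v = 1
    · subst hv1
      rw [eq_one_of_rankLE_one hu huv]
      exact bruhatLEWrt_one_one
    obtain ⟨a, b, h, hdesc⟩ := exists_descent_of_ne_one hv hv1
    have hdec := ncard_inversions_mul_swap_of_gt h hdesc
    have hvs : v * swap a b ∈ Sym T := mul_mem hv h.swap_mem_sym
    have hasc : (v * swap a b) a < (v * swap a b) b := by simpa [Perm.mul_apply] using hdesc
    rw [← mul_swap_mul_self a b v]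
    rcases lt_or_gt_of_ne (u.injective.ne h.lt.ne) with hu' | hu'
    · exact bruhatLEWrt_mul_swap h
        (ih _ (by omega) hu hvs (h.rankLE_mul_swap_of_lt huv hu') rfl) hasc
    · rw [← mul_swap_mul_self a b u]
      exact bruhatLEWrt_mul_swap_mul_swap h
        (ih _ (by omega) (mul_mem hu h.swap_mem_sym) hvs
          (h.rankLE_mul_swap huv (iff_of_false hu'.not_gt hdesc.not_gt)) rfl)
        (by simpa [Perm.mul_apply] using hu') hasc

theorem bruhatLEWrt_iff_rankLE (hu : u ∈ Sym T) (hv : v ∈ Sym T) :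
    bruhatLEWrt (adjTranspositionsOn n T) u v ↔ RankLE T u v := by
  refine ⟨?_, bruhatLEWrt_of_rankLE hu hv⟩
  rintro ⟨l, hl, rfl, l', hsub, hl', rfl⟩
  exact rankLE_of_sublist hl hsub hl'

theorem exists_isLowerSet_forall_mem_iff {α β γ : Type*} [Preorder β] [Preorder γ]
    {S : Set α} {f : α → β} {g : α → γ}
    (hfg : ∀ b ∈ S, ∀ c ∈ S, f b ≤ f c ↔ g b ≤ g c)
    {I : Set β} (hI : IsLowerSet I) :
    ∃ J : Set γ, IsLowerSet J ∧ ∀ b ∈ S, f b ∈ I ↔ g b ∈ J := by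
  refine ⟨lowerClosure (g '' (S ∩ f ⁻¹' I)), (lowerClosure _).lower, fun b hb => ?_⟩
  simp only [SetLike.mem_coe, mem_lowerClosure]
  constructor
  · exact fun hbI => ⟨g b, ⟨b, ⟨hb, hbI⟩, rfl⟩, le_rfl⟩
  · rintro ⟨_, ⟨c, ⟨hc, hcI⟩, rfl⟩, hbc⟩
    exact hI ((hfg b hb c hc).2 hbc) hcI

theorem rankCount_univ_mul {S : Set (Fin n)} {z : Perm (Fin n)} (hz : z ∈ Sym S)
    (hIJ : ∀ b ∈ S, w⁻¹ b ∈ I ↔ b ∈ J) :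
    rankCount Set.univ (z * w) I k =
      rankCount S z J k + {b | b ∉ S ∧ w⁻¹ b ∈ I ∧ k ≤ b}.ncard := by
  have hpre :
      Set.univ ∩ I ∩ {c | k ≤ (z * w) c} = w ⁻¹' {b | w⁻¹ b ∈ I ∧ k ≤ z b} := by
    ext c
    simp [Perm.mul_apply]
  rw [rankCount, hpre, Set.ncard_preimage_of_injective_subset_range w.injective (by simp),
    ← Set.ncard_inter_add_ncard_sdiff_eq_ncard _ S, rankCount]
  congr 2 <;> ext b
  · simp only [Set.mem_inter_iff, Set.mem_ofPred_eq]
    constructor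
    · exact fun ⟨⟨hbI, hk⟩, hb⟩ => ⟨⟨hb, (hIJ b hb).1 hbI⟩, hk⟩
    · exact fun ⟨⟨hb, hbJ⟩, hk⟩ => ⟨⟨(hIJ b hb).2 hbJ, hk⟩, hb⟩
  · simp only [Set.mem_sdiff, Set.mem_ofPred_eq]
    constructor
    · exact fun ⟨⟨hbI, hk⟩, hb⟩ => ⟨hb, hbI, apply_eq_of_mem_sym hz hb ▸ hk⟩
    · exact fun ⟨hb, hbI, hk⟩ => ⟨⟨hbI, (apply_eq_of_mem_sym hz hb).symm ▸ hk⟩, hb⟩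

theorem rankLE_univ_mul_iff {S : Set (Fin n)} {x y : Perm (Fin n)} (hw : StrictMonoOn ⇑w⁻¹ S)
    (hx : x ∈ Sym S) (hy : y ∈ Sym S) :
    RankLE Set.univ (x * w) (y * w) ↔ RankLE S x y := by
  have hle : ∀ b ∈ S, ∀ c ∈ S, w⁻¹ b ≤ w⁻¹ c ↔ id b ≤ id c :=
    fun b hb c hc => hw.le_iff_le hb hc
  constructor
  · intro h J hJ k
    obtain ⟨I, hI, hJI⟩ :=
      exists_isLowerSet_forall_mem_iff (fun b hb c hc => (hle b hb c hc).symm) hJ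
    have := h I hI k
    rw [rankCount_univ_mul hx fun b hb => (hJI b hb).symm,
      rankCount_univ_mul hy fun b hb => (hJI b hb).symm] at this
    omega
  · intro h I hI k
    obtain ⟨J, hJ, hIJ⟩ := exists_isLowerSet_forall_mem_iff hle hI
    rw [rankCount_univ_mul hx hIJ, rankCount_univ_mul hy hIJ]
    exact Nat.add_le_add_right (h J hJ k) _

end BruhatSym

open BruhatSym in
theorem bruhat_mul_right_iff_general (n : ℕ) (S : Set (Fin n))
    (w : Equiv.Perm (Fin n)) (hw : ∀ i ∈ S, ∀ j ∈ S, i < j → w⁻¹ i < w⁻¹ j)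
    (x y : Equiv.Perm (Fin n))
    (hx : ∀ i, i ∉ S → x i = i) (hy : ∀ i, i ∉ S → y i = i) :
    bruhatLEWrt (adjTranspositions n) (x * w) (y * w) ↔
      bruhatLEWrt (adjTranspositionsOn n S) x y := by
  have hxS : x ∈ Sym S := (mem_fixingSubgroup_iff _).2 hx
  have hyS : y ∈ Sym S := (mem_fixingSubgroup_iff _).2 hy
  have huniv (z : Perm (Fin n)) : z ∈ Sym (Set.univ : Set (Fin n)) := by simp
  rw [adjTranspositions_eq_adjTranspositionsOn_univ, bruhatLEWrt_iff_rankLE (huniv _) (huniv _),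
    bruhatLEWrt_iff_rankLE hxS hyS]
  exact rankLE_univ_mul_iff (fun i hi j hj hij => hw i hi j hj hij) hxS hyS

/-- Proposition 7.3.3: for `w` with `w⁻¹` increasing on `S` and `x, y ∈ Sym(S)`,
`xw ≤ yw` in the Bruhat order of `Sym(n)` iff `x ≤_S y` in the Bruhat order of `Sym(S)`. -/
theorem bruhat_mul_right_iff (n : ℕ) (S : Set (Fin n)) (hS : S.Nonempty)
    (w : Equiv.Perm (Fin n)) (hw : ∀ i ∈ S, ∀ j ∈ S, i < j → w⁻¹ i < w⁻¹ j)
    (x y : Equiv.Perm (Fin n))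
    (hx : ∀ i, i ∉ S → x i = i) (hy : ∀ i, i ∉ S → y i = i) :
    bruhatLEWrt (adjTranspositions n) (x * w) (y * w) ↔
      bruhatLEWrt (adjTranspositionsOn n S) x y :=
  bruhat_mul_right_iff_general n S w hw x y hx hy
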